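/- arXiv:1703.08883 — 2 statements merged into one kernel-verified Lean document; each statement's English description precedes it below -/
import Mathlib

section
/- Let g : [a,b] → ℝ be absolutely continuous with g' essentially bounded, and let a ≤ c < d ≤ b with (d−c) < (b−a). Then |(1/(b-a))∫_a^b g(t) dt − (1/(d-c))∫_c^d g(s) ds| ≤ [1/4 + (((a+b)/2 − (c+d)/2)/((b-a)−(d-c)))²]·[(b-a) − (d-c)]·‖g'‖_∞ ≤ (1/2)[(b-a) − (d-c)]·‖g'‖_∞. -/
open MeasureTheory Set intervalIntegral

/-- The Čebyšev functional on `[α, β]`. -/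
noncomputable def cheb (f g : ℝ → ℝ) (α β : ℝ) : ℝ :=
  (β - α)⁻¹ * (∫ t in α..β, f t * g t) -
    ((β - α)⁻¹ * ∫ t in α..β, f t) * ((β - α)⁻¹ * ∫ t in α..β, g t)

/-- The total variation of `f` on `[a, b]`. -/
noncomputable def totalVar (f : ℝ → ℝ) (a b : ℝ) : ℝ :=
  (eVariationOn f (Icc a b)).toReal

/-- The essential supremum norm of `h` on `[a, b]`. -/
noncomputable def supNorm (h : ℝ → ℝ) (a b : ℝ) : ℝ :=
  (eLpNorm h ⊤ (volume.restrict (Icc a b))).toReal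

lemma fub (f : ℝ → ℝ) {α β : ℝ} (hab : α ≤ β) (hf : IntegrableOn f (Ioc α β)) :
    (∫ s in α..β, (∫ u in α..s, f u)) = ∫ u in α..β, (β - u) * f u := by
  set μ := volume.restrict (Ioc α β) with hμ
  have hfi : Integrable f μ := hf
  have hFm : MeasurableSet {p : ℝ × ℝ | p.2 ≤ p.1} :=
    measurableSet_le measurable_snd measurable_fst
  set F : ℝ → ℝ → ℝ := fun s u => (Iic s).indicator f u with hF
  have huncurry : Function.uncurry F = ({p : ℝ × ℝ | p.2 ≤ p.1}).indicator (fun p => f p.2) := by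
    funext p
    simp [Function.uncurry, Set.indicator_apply, hF]
  have hFasm : AEStronglyMeasurable (Function.uncurry F) (μ.prod μ) := by
    rw [huncurry]
    exact (hfi.aestronglyMeasurable.comp_snd).indicator hFm
  have hFint : Integrable (Function.uncurry F) (μ.prod μ) := by
    rw [integrable_prod_iff hFasm]
    constructor
    · filter_upwards with s
      exact hfi.indicator measurableSet_Iic
    · apply Integrable.mono' (g := fun _ : ℝ => ∫ u, ‖f u‖ ∂μ) (integrable_const _)
      · exact hFasm.norm.integral_prod_right'
      · filter_upwards with s
        rw [Real.norm_eq_abs, abs_of_nonneg (integral_nonneg fun u => norm_nonneg _)]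
        apply integral_mono_of_nonneg (Filter.Eventually.of_forall fun u => norm_nonneg _)
          hfi.norm
        filter_upwards with u
        exact norm_indicator_le_norm_self _ _
  have key : ∀ s ∈ Ioc α β, (∫ u in α..s, f u) = ∫ u, F s u ∂μ := by
    intro s hs
    rw [intervalIntegral.integral_of_le (le_of_lt hs.1)]
    rw [hμ, hF]
    simp only []
    rw [MeasureTheory.integral_indicator measurableSet_Iic,
      Measure.restrict_restrict measurableSet_Iic]
    congr 1
    rw [Set.inter_comm, Set.Ioc_inter_Iic, min_eq_right hs.2]
  calc (∫ s in α..β, (∫ u in α..s, f u))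
      = ∫ s, (∫ u, F s u ∂μ) ∂μ := by
        rw [intervalIntegral.integral_of_le hab]
        exact setIntegral_congr_fun measurableSet_Ioc key
    _ = ∫ u, (∫ s, F s u ∂μ) ∂μ := integral_integral_swap hFint
    _ = ∫ u in α..β, (β - u) * f u := by
        rw [intervalIntegral.integral_of_le hab]
        apply setIntegral_congr_fun measurableSet_Ioc
        intro u hu
        show (∫ s, F s u ∂μ) = (β - u) * f u
        have h1 : (∫ s, F s u ∂μ) = (μ (Ici u)).toReal • f u := by
          rw [show (μ (Ici u)).toReal = μ.real (Ici u) from rfl, ← integral_indicator_const (f u) measurableSet_Ici]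
          apply MeasureTheory.integral_congr_ae
          filter_upwards with s
          simp [hF, Set.indicator_apply]
        have h2 : Ici u ∩ Ioc α β = Icc u β := by
          ext v
          simp only [mem_inter_iff, mem_Ici, mem_Ioc, mem_Icc]
          constructor
          · rintro ⟨h3, _, h4⟩; exact ⟨h3, h4⟩
          · rintro ⟨h3, h4⟩; exact ⟨h3, lt_of_lt_of_le hu.1 h3, h4⟩
        rw [h1, hμ, Measure.restrict_apply measurableSet_Ici, h2, Real.volume_Icc,
          ENNReal.toReal_ofReal (by linarith [hu.2] : (0:ℝ) ≤ β - u), smul_eq_mul]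

lemma linint (p q α β : ℝ) : (∫ u in α..β, (p * u + q)) = p * (β^2 - α^2) / 2 + q * (β - α) := by
  rw [intervalIntegral.integral_add (intervalIntegral.intervalIntegrable_id.const_mul p)
    intervalIntegrable_const, intervalIntegral.integral_const_mul, integral_id,
    intervalIntegral.integral_const, smul_eq_mul]
  ring

lemma bnd (g' φ : ℝ → ℝ) (a b α β : ℝ) (hα : a ≤ α) (hαβ : α ≤ β) (hβ : β ≤ b)
    (hφ : Continuous φ) (hg'i : IntervalIntegrable g' volume α β)
    (hg'b : MemLp g' ⊤ (volume.restrict (Icc a b))) :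
    |∫ u in α..β, φ u * g' u| ≤
      (∫ u in α..β, |φ u|) * (eLpNorm g' ⊤ (volume.restrict (Icc a b))).toReal := by
  set M := (eLpNorm g' ⊤ (volume.restrict (Icc a b))).toReal with hM
  have hae : ∀ᵐ u ∂(volume.restrict (Icc a b)), |g' u| ≤ M := by
    have h1 := MeasureTheory.ae_le_eLpNormEssSup (f := g') (μ := volume.restrict (Icc a b))
    have hne : eLpNorm g' ⊤ (volume.restrict (Icc a b)) ≠ ⊤ := hg'b.2.ne
    rw [MeasureTheory.eLpNorm_exponent_top] at hne
    filter_upwards [h1] with u hu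
    have : (‖g' u‖₊ : ENNReal).toReal ≤ M := by
      rw [hM, MeasureTheory.eLpNorm_exponent_top]
      exact ENNReal.toReal_mono hne hu
    simpa using this
  have hae2 : ∀ᵐ u ∂(volume.restrict (Icc α β)), |g' u| ≤ M := by
    apply ae_restrict_of_ae_restrict_of_subset (Icc_subset_Icc hα hβ) hae
  have hint1 : IntervalIntegrable (fun u => |φ u * g' u|) volume α β :=
    (hg'i.continuousOn_mul hφ.continuousOn).abs
  have hint2 : IntervalIntegrable (fun u => |φ u| * M) volume α β :=
    ((hφ.abs.mul continuous_const).intervalIntegrable _ _)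
  calc |∫ u in α..β, φ u * g' u| ≤ ∫ u in α..β, |φ u * g' u| :=
        intervalIntegral.abs_integral_le_integral_abs hαβ
    _ ≤ ∫ u in α..β, |φ u| * M := by
        apply intervalIntegral.integral_mono_ae_restrict hαβ hint1 hint2
        filter_upwards [hae2] with u hu
        rw [abs_mul]
        exact mul_le_mul_of_nonneg_left hu (abs_nonneg _)
    _ = (∫ u in α..β, |φ u|) * M := intervalIntegral.integral_mul_const _ _

set_option maxHeartbeats 1600000 in
theorem stmt18 (g g' : ℝ → ℝ) (a b c d : ℝ)
    (hac : a ≤ c) (hcd : c < d) (hdb : d ≤ b) (hlt : d - c < b - a)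
    (hg : ∀ x ∈ Icc a b, g x = g a + ∫ t in a..x, g' t)
    (hg'i : IntervalIntegrable g' volume a b)
    (hg'b : MemLp g' ⊤ (volume.restrict (Icc a b))) :
    |(b - a)⁻¹ * (∫ t in a..b, g t) - (d - c)⁻¹ * ∫ s in c..d, g s| ≤
        (1 / 4 + (((a + b) / 2 - (c + d) / 2) / ((b - a) - (d - c))) ^ 2) *
          ((b - a) - (d - c)) * supNorm g' a b ∧
      (1 / 4 + (((a + b) / 2 - (c + d) / 2) / ((b - a) - (d - c))) ^ 2) *
          ((b - a) - (d - c)) * supNorm g' a b ≤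
        (1 / 2) * ((b - a) - (d - c)) * supNorm g' a b := by
  have hab : a ≤ b := hac.trans (hcd.le.trans hdb)
  have hba : (0:ℝ) < b - a := by linarith
  have hdc : (0:ℝ) < d - c := by linarith
  have hL : (0:ℝ) < (b - a) - (d - c) := by linarith
  set L : ℝ := (b - a) - (d - c) with hLdef
  set M : ℝ := supNorm g' a b with hMdef
  have hM0 : 0 ≤ M := ENNReal.toReal_nonneg
  set u₀ : ℝ := (b * c - d * a) / L with hu₀
  have hcu₀ : c ≤ u₀ := by
    rw [hu₀, le_div_iff₀ hL, hLdef]; linarith [mul_nonneg hdc.le (sub_nonneg.mpr hac)]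
  have hu₀d : u₀ ≤ d := by
    rw [hu₀, div_le_iff₀ hL, hLdef]; linarith [mul_nonneg (sub_nonneg.mpr hdb) hdc.le]
  -- memberships for mono_set
  have mem_ab : ∀ {x : ℝ}, a ≤ x → x ≤ b → x ∈ uIcc a b := by
    intro x h1 h2; rw [uIcc_of_le hab]; exact ⟨h1, h2⟩
  have hg'ac : IntervalIntegrable g' volume a c :=
    hg'i.mono_set (uIcc_subset_uIcc (mem_ab le_rfl hab) (mem_ab hac (hcd.le.trans hdb)))
  have hg'cd : IntervalIntegrable g' volume c d :=
    hg'i.mono_set (uIcc_subset_uIcc (mem_ab hac (hcd.le.trans hdb)) (mem_ab (hac.trans hcd.le) hdb))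
  have hg'cu : IntervalIntegrable g' volume c u₀ :=
    hg'cd.mono_set (uIcc_subset_uIcc (by rw [uIcc_of_le hcd.le]; exact ⟨le_rfl, hcd.le⟩)
      (by rw [uIcc_of_le hcd.le]; exact ⟨hcu₀, hu₀d⟩))
  have hg'ud : IntervalIntegrable g' volume u₀ d :=
    hg'cd.mono_set (uIcc_subset_uIcc (by rw [uIcc_of_le hcd.le]; exact ⟨hcu₀, hu₀d⟩)
      (by rw [uIcc_of_le hcd.le]; exact ⟨hcd.le, le_rfl⟩))
  have hg'db : IntervalIntegrable g' volume d b :=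
    hg'i.mono_set (uIcc_subset_uIcc (mem_ab (hac.trans hcd.le) hdb) (mem_ab hab le_rfl))
  -- identity I1
  have hFcont : ContinuousOn (fun x => ∫ t in a..x, g' t) (uIcc a b) :=
    intervalIntegral.continuousOn_primitive_interval (by
      rw [uIcc_of_le hab]
      exact (intervalIntegrable_iff_integrableOn_Icc_of_le hab).mp hg'i)
  have I1 : (∫ t in a..b, g t) = (b - a) * g a + ∫ u in a..b, (b - u) * g' u := by
    have h1 : (∫ t in a..b, g t) = ∫ t in a..b, (g a + ∫ s in a..t, g' s) := by
      apply intervalIntegral.integral_congr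
      intro t ht
      exact hg t (by rwa [uIcc_of_le hab] at ht)
    rw [h1, intervalIntegral.integral_add intervalIntegrable_const
      (hFcont.intervalIntegrable), intervalIntegral.integral_const, smul_eq_mul,
      fub g' hab hg'i.1]
  -- identity I2
  have hGcont : ContinuousOn (fun x => ∫ t in c..x, g' t) (uIcc c d) :=
    intervalIntegral.continuousOn_primitive_interval (by
      rw [uIcc_of_le hcd.le]
      exact (intervalIntegrable_iff_integrableOn_Icc_of_le hcd.le).mp hg'cd)
  have I2 : (∫ s in c..d, g s) =
      (d - c) * g a + (d - c) * (∫ t in a..c, g' t) + ∫ u in c..d, (d - u) * g' u := by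
    have h1 : (∫ s in c..d, g s) =
        ∫ s in c..d, ((g a + ∫ t in a..c, g' t) + ∫ t in c..s, g' t) := by
      apply intervalIntegral.integral_congr
      intro s hs
      rw [uIcc_of_le hcd.le] at hs
      have hsmem : s ∈ Icc a b := ⟨hac.trans hs.1, hs.2.trans hdb⟩
      have hsplit : (∫ t in a..c, g' t) + (∫ t in c..s, g' t) = ∫ t in a..s, g' t :=
        intervalIntegral.integral_add_adjacent_intervals hg'ac
          (hg'cd.mono_set (uIcc_subset_uIcc (by rw [uIcc_of_le hcd.le]; exact ⟨le_rfl, hcd.le⟩)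
            (by rw [uIcc_of_le hcd.le]; exact hs)))
      rw [hg s hsmem, ← hsplit]; ring
    rw [h1, intervalIntegral.integral_add intervalIntegrable_const hGcont.intervalIntegrable,
      intervalIntegral.integral_const, smul_eq_mul, fub g' hcd.le hg'cd.1]
    ring
  -- kernel functions
  set φ1 : ℝ → ℝ := fun u => (b-a)⁻¹ * (b - u) - 1 with hφ1
  set φ2 : ℝ → ℝ := fun u => (b-a)⁻¹ * (b - u) - (d-c)⁻¹ * (d - u) with hφ2
  set φ3 : ℝ → ℝ := fun u => (b-a)⁻¹ * (b - u) with hφ3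
  set φ4 : ℝ → ℝ := fun u => (d-c)⁻¹ * (d - u) with hφ4
  have hφ1c : Continuous φ1 := by rw [hφ1]; fun_prop
  have hφ2c : Continuous φ2 := by rw [hφ2]; fun_prop
  have hφ3c : Continuous φ3 := by rw [hφ3]; fun_prop
  have hφ4c : Continuous φ4 := by rw [hφ4]; fun_prop
  have hg'ad : IntervalIntegrable g' volume a d :=
    hg'i.mono_set (uIcc_subset_uIcc (mem_ab le_rfl hab) (mem_ab (hac.trans hcd.le) hdb))
  -- integrable products
  have imul : ∀ (φ : ℝ → ℝ) {α β : ℝ}, Continuous φ → IntervalIntegrable g' volume α β →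
      IntervalIntegrable (fun u => φ u * g' u) volume α β :=
    fun φ _ _ hφ hgi => hgi.continuousOn_mul hφ.continuousOn
  set S1 : ℝ := ∫ u in a..c, φ1 u * g' u with hS1
  set S2 : ℝ := ∫ u in c..u₀, φ2 u * g' u with hS2
  set S3 : ℝ := ∫ u in u₀..d, φ2 u * g' u with hS3
  set S4 : ℝ := ∫ u in d..b, φ3 u * g' u with hS4
  -- decomposition of ∫ f3 over a..b
  have adj3a : (∫ u in c..u₀, φ3 u * g' u) + (∫ u in u₀..d, φ3 u * g' u)
      = ∫ u in c..d, φ3 u * g' u :=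
    intervalIntegral.integral_add_adjacent_intervals (imul φ3 hφ3c hg'cu) (imul φ3 hφ3c hg'ud)
  have adj3b : (∫ u in a..c, φ3 u * g' u) + (∫ u in c..d, φ3 u * g' u)
      = ∫ u in a..d, φ3 u * g' u :=
    intervalIntegral.integral_add_adjacent_intervals (imul φ3 hφ3c hg'ac) (imul φ3 hφ3c hg'cd)
  have adj3c : (∫ u in a..d, φ3 u * g' u) + (∫ u in d..b, φ3 u * g' u)
      = ∫ u in a..b, φ3 u * g' u :=
    intervalIntegral.integral_add_adjacent_intervals (imul φ3 hφ3c hg'ad) (imul φ3 hφ3c hg'db)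
  have adj4 : (∫ u in c..u₀, φ4 u * g' u) + (∫ u in u₀..d, φ4 u * g' u)
      = ∫ u in c..d, φ4 u * g' u :=
    intervalIntegral.integral_add_adjacent_intervals (imul φ4 hφ4c hg'cu) (imul φ4 hφ4c hg'ud)
  -- rewrite the two weighted integrals
  have e3 : (b - a)⁻¹ * (∫ u in a..b, (b - u) * g' u) = ∫ u in a..b, φ3 u * g' u := by
    rw [← intervalIntegral.integral_const_mul]
    apply intervalIntegral.integral_congr
    intro u _
    simp only [hφ3]; ring
  have e4 : (d - c)⁻¹ * (∫ u in c..d, (d - u) * g' u) = ∫ u in c..d, φ4 u * g' u := by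
    rw [← intervalIntegral.integral_const_mul]
    apply intervalIntegral.integral_congr
    intro u _
    simp only [hφ4]; ring
  -- split S1, S2, S3
  have s1 : S1 = (∫ u in a..c, φ3 u * g' u) - ∫ u in a..c, g' u := by
    rw [hS1, ← intervalIntegral.integral_sub (imul φ3 hφ3c hg'ac) hg'ac]
    apply intervalIntegral.integral_congr
    intro u _
    simp only [hφ1, hφ3]; ring
  have s2 : S2 = (∫ u in c..u₀, φ3 u * g' u) - ∫ u in c..u₀, φ4 u * g' u := by
    rw [hS2, ← intervalIntegral.integral_sub (imul φ3 hφ3c hg'cu) (imul φ4 hφ4c hg'cu)]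
    apply intervalIntegral.integral_congr
    intro u _
    simp only [hφ2, hφ3, hφ4]; ring
  have s3 : S3 = (∫ u in u₀..d, φ3 u * g' u) - ∫ u in u₀..d, φ4 u * g' u := by
    rw [hS3, ← intervalIntegral.integral_sub (imul φ3 hφ3c hg'ud) (imul φ4 hφ4c hg'ud)]
    apply intervalIntegral.integral_congr
    intro u _
    simp only [hφ2, hφ3, hφ4]; ring
  -- main decomposition
  have hD : (b - a)⁻¹ * (∫ t in a..b, g t) - (d - c)⁻¹ * (∫ s in c..d, g s)
      = S1 + S2 + S3 + S4 := by
    rw [I1, I2]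
    have h1 : (b - a)⁻¹ * ((b - a) * g a + ∫ u in a..b, (b - u) * g' u)
        = g a + (b - a)⁻¹ * (∫ u in a..b, (b - u) * g' u) := by
      field_simp
    have h2 : (d - c)⁻¹ * ((d - c) * g a + (d - c) * (∫ t in a..c, g' t)
          + ∫ u in c..d, (d - u) * g' u)
        = g a + (∫ t in a..c, g' t) + (d - c)⁻¹ * (∫ u in c..d, (d - u) * g' u) := by
      field_simp
    rw [h1, h2, e3, e4, ← adj3c, ← adj3b, ← adj3a, ← adj4, s1, s2, s3, hS4]
    ring
  -- bounds on the four pieces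
  have hMeq : (eLpNorm g' ⊤ (volume.restrict (Icc a b))).toReal = M := rfl
  have b1 : |S1| ≤ (∫ u in a..c, |φ1 u|) * M := by
    rw [hS1, ← hMeq]
    exact bnd g' φ1 a b a c le_rfl hac (hcd.le.trans hdb) hφ1c hg'ac hg'b
  have b2 : |S2| ≤ (∫ u in c..u₀, |φ2 u|) * M := by
    rw [hS2, ← hMeq]
    exact bnd g' φ2 a b c u₀ hac hcu₀ (hu₀d.trans hdb) hφ2c hg'cu hg'b
  have b3 : |S3| ≤ (∫ u in u₀..d, |φ2 u|) * M := by
    rw [hS3, ← hMeq]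
    exact bnd g' φ2 a b u₀ d (by linarith) hu₀d hdb hφ2c hg'ud hg'b
  have b4 : |S4| ≤ (∫ u in d..b, |φ3 u|) * M := by
    rw [hS4, ← hMeq]
    exact bnd g' φ3 a b d b (by linarith) hdb le_rfl hφ3c hg'db hg'b
  -- explicit values of the |φ| integrals
  have V1 : (∫ u in a..c, |φ1 u|) = (c-a)^2/(2*(b-a)) := by
    have hval : ((c-a)^2/(2*(b-a)) : ℝ)
        = (b-a)⁻¹ * (c^2 - a^2) / 2 + (-((b-a)⁻¹ * a)) * (c - a) := by
      field_simp; ring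
    rw [hval, ← linint]
    apply intervalIntegral.integral_congr
    intro u hu
    rw [uIcc_of_le hac] at hu
    simp only [hφ1]
    have h1 : (b-a)⁻¹ * (b - u) - 1 = (b-a)⁻¹ * (a - u) := by
      field_simp
      ring
    rw [h1, abs_of_nonpos (mul_nonpos_of_nonneg_of_nonpos (inv_nonneg.mpr hba.le)
      (by linarith [hu.1]))]
    ring
  have V2 : (∫ u in c..u₀, |φ2 u|) = (c-a)^2*(d-c)/(2*L*(b-a)) := by
    have hval : ((c-a)^2*(d-c)/(2*L*(b-a)) : ℝ)
        = ((b-a)⁻¹ - (d-c)⁻¹) * (u₀^2 - c^2) / 2 + ((d-c)⁻¹ * d - (b-a)⁻¹ * b) * (u₀ - c) := by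
      rw [hu₀, hLdef]; field_simp [(show b - a - (d - c) ≠ 0 by linarith)]; ring
    rw [hval, ← linint]
    apply intervalIntegral.integral_congr
    intro u hu
    rw [uIcc_of_le hcu₀] at hu
    simp only [hφ2]
    have key : (b-a)⁻¹ * (b - u) - (d-c)⁻¹ * (d - u) ≤ 0 := by
      simp only [sub_nonpos, inv_mul_eq_div]
      rw [div_le_div_iff₀ hba hdc]
      have h : u * L ≤ b * c - d * a := (le_div_iff₀ hL).mp (by rw [← hu₀]; exact hu.2)
      rw [hLdef] at h
      linarith [h]
    rw [abs_of_nonpos key]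
    ring
  have V3 : (∫ u in u₀..d, |φ2 u|) = (b-d)^2*(d-c)/(2*L*(b-a)) := by
    have hval : ((b-d)^2*(d-c)/(2*L*(b-a)) : ℝ)
        = ((d-c)⁻¹ - (b-a)⁻¹) * (d^2 - u₀^2) / 2 + ((b-a)⁻¹ * b - (d-c)⁻¹ * d) * (d - u₀) := by
      rw [hu₀, hLdef]; field_simp [(show b - a - (d - c) ≠ 0 by linarith)]; ring
    rw [hval, ← linint]
    apply intervalIntegral.integral_congr
    intro u hu
    rw [uIcc_of_le hu₀d] at hu
    simp only [hφ2]
    have key : (0:ℝ) ≤ (b-a)⁻¹ * (b - u) - (d-c)⁻¹ * (d - u) := by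
      simp only [sub_nonneg, inv_mul_eq_div]
      rw [div_le_div_iff₀ hdc hba]
      have h : b * c - d * a ≤ u * L := (div_le_iff₀ hL).mp (by rw [← hu₀]; exact hu.1)
      rw [hLdef] at h
      linarith [h]
    rw [abs_of_nonneg key]
    ring
  have V4 : (∫ u in d..b, |φ3 u|) = (b-d)^2/(2*(b-a)) := by
    have hval : ((b-d)^2/(2*(b-a)) : ℝ)
        = (-(b-a)⁻¹) * (b^2 - d^2) / 2 + ((b-a)⁻¹ * b) * (b - d) := by
      field_simp; ring
    rw [hval, ← linint]
    apply intervalIntegral.integral_congr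
    intro u hu
    rw [uIcc_of_le hdb] at hu
    simp only [hφ3]
    rw [abs_of_nonneg (mul_nonneg (inv_nonneg.mpr hba.le) (by linarith [hu.2]))]
    ring
  have htri : |S1 + S2 + S3 + S4| ≤ |S1| + |S2| + |S3| + |S4| := by
    have t1 := abs_add_le (S1 + S2 + S3) S4
    have t2 := abs_add_le (S1 + S2) S3
    have t3 := abs_add_le S1 S2
    linarith
  constructor
  · rw [hD]
    have step : |S1 + S2 + S3 + S4| ≤
        ((∫ u in a..c, |φ1 u|) + (∫ u in c..u₀, |φ2 u|) + (∫ u in u₀..d, |φ2 u|)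
          + (∫ u in d..b, |φ3 u|)) * M := by
      rw [add_mul, add_mul, add_mul]
      exact htri.trans (add_le_add (add_le_add (add_le_add b1 b2) b3) b4)
    refine step.trans (le_of_eq ?_)
    rw [V1, V2, V3, V4]
    congr 1
    rw [hLdef]
    field_simp [(show b - a - (d - c) ≠ 0 by linarith)]
    ring
  · have hsq : (((a + b) / 2 - (c + d) / 2) / L) ^ 2 ≤ 1 / 4 := by
      rw [div_pow, div_le_div_iff₀ (by positivity) (by norm_num)]
      rw [hLdef]
      linarith [mul_nonneg (sub_nonneg.mpr hac) (sub_nonneg.mpr hdb)]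
    have := mul_le_mul_of_nonneg_right (mul_le_mul_of_nonneg_right
      (by linarith : 1 / 4 + (((a + b) / 2 - (c + d) / 2) / L) ^ 2 ≤ 1 / 2) hL.le) hM0
    linarith
end

section
/- Let g : [a,b] → ℝ be monotone nondecreasing and let a ≤ c < d ≤ b with (d−c) < (b−a). Set s₀ = (cb − ad)/((b-a) − (d-c)). Then s₀ ∈ [c,d] and |(1/(b-a))∫_a^b g(t) dt − (1/(d-c))∫_c^d g(s) ds| ≤ ((b-d)/(b-a))·g(b) − ((c-a)/(b-a))·g(a) + ((c+d−(a+b))/(b-a))·g(s₀). -/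
set_option maxHeartbeats 800000


open MeasureTheory Set intervalIntegral

theorem stmt19 (g : ℝ → ℝ) (a b c d : ℝ)
    (hac : a ≤ c) (hcd : c < d) (hdb : d ≤ b) (hlt : d - c < b - a)
    (hg : MonotoneOn g (Icc a b)) :
    (c * b - a * d) / ((b - a) - (d - c)) ∈ Icc c d ∧
      |(b - a)⁻¹ * (∫ t in a..b, g t) - (d - c)⁻¹ * ∫ s in c..d, g s| ≤
        ((b - d) / (b - a)) * g b - ((c - a) / (b - a)) * g a +
          ((c + d - (a + b)) / (b - a)) * g ((c * b - a * d) / ((b - a) - (d - c))) := by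
  have hL : (0:ℝ) < b - a := by linarith
  have hl : (0:ℝ) < d - c := by linarith
  have hk : (0:ℝ) < (b - a) - (d - c) := by linarith
  set s : ℝ := (c * b - a * d) / ((b - a) - (d - c)) with hs_def
  have hsk : s * ((b - a) - (d - c)) = c * b - a * d := div_mul_cancel₀ _ (ne_of_gt hk)
  have hsc : c ≤ s := by
    rw [hs_def, le_div_iff₀ hk]
    nlinarith [mul_nonneg (sub_nonneg.2 hac) hl.le]
  have hsd : s ≤ d := by
    rw [hs_def, div_le_iff₀ hk]
    nlinarith [mul_nonneg (sub_nonneg.2 hdb) hl.le]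
  refine ⟨⟨hsc, hsd⟩, ?_⟩
  have has : a ≤ s := le_trans hac hsc
  have hsb : s ≤ b := le_trans hsd hdb
  have hab : a ≤ b := by linarith
  have hint : ∀ x y, a ≤ x → x ≤ y → y ≤ b → IntervalIntegrable g volume x y := by
    intro x y h1 h2 h3
    apply MonotoneOn.intervalIntegrable
    apply hg.mono
    rw [Set.uIcc_of_le h2]
    exact Set.Icc_subset_Icc h1 h3
  have hlow : ∀ x y, a ≤ x → x ≤ y → y ≤ b → (y - x) * g x ≤ ∫ t in x..y, g t := by
    intro x y h1 h2 h3
    have h := intervalIntegral.integral_mono_on h2 (_root_.intervalIntegrable_const (c := g x))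
      (hint x y h1 h2 h3)
      (fun t ht => hg ⟨h1, le_trans h2 h3⟩ ⟨le_trans h1 ht.1, le_trans ht.2 h3⟩ ht.1)
    simpa using h
  have hup : ∀ x y, a ≤ x → x ≤ y → y ≤ b → (∫ t in x..y, g t) ≤ (y - x) * g y := by
    intro x y h1 h2 h3
    have h := intervalIntegral.integral_mono_on h2 (hint x y h1 h2 h3)
      (_root_.intervalIntegrable_const (c := g y))
      (fun t ht => hg ⟨le_trans h1 ht.1, le_trans ht.2 h3⟩ ⟨le_trans h1 h2, h3⟩ ht.2)
    simpa using h
  set A := ∫ t in a..c, g t with hA_def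
  set P := ∫ t in c..s, g t with hP_def
  set Q := ∫ t in s..d, g t with hQ_def
  set B := ∫ t in d..b, g t with hB_def
  have hI2 : (∫ t in c..d, g t) = P + Q :=
    (intervalIntegral.integral_add_adjacent_intervals (hint c s hac hsc hsb)
      (hint s d has hsd hdb)).symm
  have hI1 : (∫ t in a..b, g t) = A + (P + Q) + B := by
    have e1 : (∫ t in a..d, g t) = A + (P + Q) := by
      rw [← hI2]
      exact (intervalIntegral.integral_add_adjacent_intervals (hint a c le_rfl hac (by linarith))
        (hint c d hac hcd.le hdb)).symm
    have e2 : (∫ t in a..b, g t) = (∫ t in a..d, g t) + B :=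
      (intervalIntegral.integral_add_adjacent_intervals (hint a d le_rfl (by linarith) hdb)
        (hint d b (by linarith) hdb le_rfl)).symm
    rw [e2, e1]
  -- endpoint bounds
  have hA1 : (c - a) * g a ≤ A := hlow a c le_rfl hac (by linarith)
  have hA2 : A ≤ (c - a) * g c := hup a c le_rfl hac (by linarith)
  have hP1 : (s - c) * g c ≤ P := hlow c s hac hsc hsb
  have hP2 : P ≤ (s - c) * g s := hup c s hac hsc hsb
  have hQ1 : (d - s) * g s ≤ Q := hlow s d has hsd hdb
  have hQ2 : Q ≤ (d - s) * g d := hup s d has hsd hdb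
  have hB1 : (b - d) * g d ≤ B := hlow d b (by linarith) hdb le_rfl
  have hB2 : B ≤ (b - d) * g b := hup d b (by linarith) hdb le_rfl
  have hgas : g a ≤ g s := hg ⟨le_rfl, hab⟩ ⟨has, hsb⟩ has
  have hgsb : g s ≤ g b := hg ⟨has, hsb⟩ ⟨hab, le_rfl⟩ hsb
  -- identities
  have hid1 : ((b - a) - (d - c)) * (s - c) = (d - c) * (c - a) := by linear_combination hsk
  have hid2 : ((b - a) - (d - c)) * (d - s) = (d - c) * (b - d) := by linear_combination -hsk
  set k : ℝ := (b - a) - (d - c) with hk_def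
  set T : ℝ := (b - d) * g b - (c - a) * g a + (c + d - (a + b)) * g s with hT_def
  have key : |(d - c) * (A + (P + Q) + B) - (b - a) * (P + Q)| ≤ (d - c) * T := by
    have h1 : (d - c) * A ≤ (d - c) * ((c - a) * g c) :=
      mul_le_mul_of_nonneg_left hA2 hl.le
    have h2 : k * ((s - c) * g c) ≤ k * P := mul_le_mul_of_nonneg_left hP1 hk.le
    have h3 : (d - c) * B ≤ (d - c) * ((b - d) * g b) :=
      mul_le_mul_of_nonneg_left hB2 hl.le
    have h4 : k * ((d - s) * g s) ≤ k * Q := mul_le_mul_of_nonneg_left hQ1 hk.le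
    have h1' : (d - c) * ((c - a) * g a) ≤ (d - c) * A :=
      mul_le_mul_of_nonneg_left hA1 hl.le
    have h2' : k * P ≤ k * ((s - c) * g s) := mul_le_mul_of_nonneg_left hP2 hk.le
    have h3' : (d - c) * ((b - d) * g d) ≤ (d - c) * B :=
      mul_le_mul_of_nonneg_left hB1 hl.le
    have h4' : k * Q ≤ k * ((d - s) * g d) := mul_le_mul_of_nonneg_left hQ2 hk.le
    have he1 : k * ((s - c) * g c) = (d - c) * ((c - a) * g c) := by
      linear_combination g c * hid1
    have he2 : k * ((d - s) * g s) = (d - c) * ((b - d) * g s) := by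
      linear_combination g s * hid2
    have he1' : k * ((s - c) * g s) = (d - c) * ((c - a) * g s) := by
      linear_combination g s * hid1
    have he2' : k * ((d - s) * g d) = (d - c) * ((b - d) * g d) := by
      linear_combination g d * hid2
    have hsl1 : (d - c) * ((c - a) * g a) ≤ (d - c) * ((c - a) * g s) :=
      mul_le_mul_of_nonneg_left
        (mul_le_mul_of_nonneg_left hgas (by linarith)) hl.le
    have hsl2 : (d - c) * ((b - d) * g s) ≤ (d - c) * ((b - d) * g b) :=
      mul_le_mul_of_nonneg_left
        (mul_le_mul_of_nonneg_left hgsb (by linarith)) hl.le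
    rw [abs_le]
    constructor
    · rw [hT_def]
      have hbma : b - a = (d - c) + k := by rw [hk_def]; ring
      rw [hbma]
      linarith [h1', h2', h3', h4', he1', he2', hsl2]
    · rw [hT_def]
      have hbma : b - a = (d - c) + k := by rw [hk_def]; ring
      rw [hbma]
      linarith [h1, h2, h3, h4, he1, he2, hsl1]
  rw [hI1, hI2]
  have hrw : (b - a)⁻¹ * (A + (P + Q) + B) - (d - c)⁻¹ * (P + Q)
      = ((d - c) * (A + (P + Q) + B) - (b - a) * (P + Q)) / ((b - a) * (d - c)) := by
    field_simp
  have hrw2 : ((b - d) / (b - a)) * g b - ((c - a) / (b - a)) * g a +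
      ((c + d - (a + b)) / (b - a)) * g s = T / (b - a) := by
    rw [hT_def]; field_simp
  rw [hrw, hrw2, abs_div, abs_of_pos (mul_pos hL hl), div_le_div_iff₀ (mul_pos hL hl) hL]
  calc |(d - c) * (A + (P + Q) + B) - (b - a) * (P + Q)| * (b - a)
      ≤ ((d - c) * T) * (b - a) := by
        apply mul_le_mul_of_nonneg_right key hL.le
    _ = T * ((b - a) * (d - c)) := by ring
end
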